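/- Fix δ ∈ (0,2). For n ≥ 1, let b_n := √( log(2/δ) / (2n) ) and define b^d_i := min{ i/(n+1) + b_n, 1 } for i = 1, …, n+1. Then there exist a constant C > 0 and an integer n₀ (both depending only on δ) such that for all n ≥ n₀: | (1/(n+1)) Σ_{i=1}^{n+1} (−log b^d_i) − ( 1 − b_n (1 − log b_n) ) | ≤ C (log n)/n. (Here 1 − log b_n = log(e/b_n).) -/

import Mathlib

/-- The DKWM half-width `b_n = √(log(2/δ)/(2n))`. -/
noncomputable def dkwmWidth (δ : ℝ) (n : ℕ) : ℝ :=
  Real.sqrt (Real.log (2 / δ) / (2 * n))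

/-- The DKWM adjustment sequence `b^d_i = min{ i/(n+1) + b_n, 1 }`. -/
noncomputable def dkwmAdj (δ : ℝ) (n i : ℕ) : ℝ :=
  min ((i : ℝ) / ((n : ℝ) + 1) + dkwmWidth δ n) 1

/-- **Mean of Fisher's combination statistic under the DKWM adjustment.**
For fixed `δ ∈ (0,2)`, there are `C > 0` and `n₀` (depending only on `δ`) such that for
all `n ≥ n₀`,
`| (1/(n+1)) Σ_{i=1}^{n+1} (−log b^d_i) − (1 − b_n (1 − log b_n)) | ≤ C (log n)/n`
(note `1 − log b_n = log(e/b_n)`). -/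
theorem stmt13 (δ : ℝ) (hδ : δ ∈ Set.Ioo (0 : ℝ) 2) :
    ∃ C : ℝ, 0 < C ∧ ∃ n₀ : ℕ, ∀ n : ℕ, n₀ ≤ n →
      |(1 / ((n : ℝ) + 1)) * (∑ i ∈ Finset.Icc 1 (n + 1), -Real.log (dkwmAdj δ n i)) -
          (1 - dkwmWidth δ n * (1 - Real.log (dkwmWidth δ n)))| ≤
        C * Real.log n / n := by
  obtain ⟨hδ0, hδ2⟩ := hδ
  set L : ℝ := Real.log (2 / δ) with hLdef
  have hL : 0 < L := Real.log_pos (by rw [lt_div_iff₀ hδ0]; linarith)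
  refine ⟨1, one_pos, max (max ⌈2 / L⌉₊ ⌈L / 2⌉₊) 1, fun n hn => ?_⟩
  have hn1 : 1 ≤ n := le_trans (le_max_right _ _) hn
  have hnR : (1 : ℝ) ≤ (n : ℝ) := by exact_mod_cast hn1
  have hnR0 : (0 : ℝ) < (n : ℝ) := by linarith
  have h2L : (2 : ℝ) / L ≤ (n : ℝ) :=
    Nat.ceil_le.mp (le_trans (le_trans (le_max_left _ _) (le_max_left _ _)) hn)
  have hL2 : L / 2 ≤ (n : ℝ) :=
    Nat.ceil_le.mp (le_trans (le_trans (le_max_right _ _) (le_max_left _ _)) hn)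
  set b : ℝ := dkwmWidth δ n with hbdef
  have hbval : b = Real.sqrt (L / (2 * n)) := rfl
  have harg0 : 0 < L / (2 * (n : ℝ)) := by positivity
  have hb0 : 0 < b := by rw [hbval]; exact Real.sqrt_pos.mpr harg0
  have hb1 : b ≤ 1 := by
    rw [hbval]
    rw [Real.sqrt_le_one]
    rw [div_le_one (by positivity)]
    linarith
  set M : ℝ := (n : ℝ) + 1 with hMdef
  have hM0 : (0 : ℝ) < M := by positivity
  have hcastm : (0 : ℝ) + ((n + 1 : ℕ) : ℝ) = M := by push_cast; ring
  -- the step function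
  set F : ℝ → ℝ := fun x => -Real.log (min (x + b) 1) with hFdef
  set g : ℝ → ℝ := fun t => F (t / M) with hgdef
  -- antitonicity
  have hFanti : ∀ x ∈ Set.Ici (0 : ℝ), ∀ y ∈ Set.Ici (0 : ℝ), x ≤ y → F y ≤ F x := by
    intro x hx y hy hxy
    have hx0 : (0 : ℝ) ≤ x := hx
    have hpos : 0 < min (x + b) 1 := lt_min (by linarith) one_pos
    have hmono : min (x + b) 1 ≤ min (y + b) 1 := min_le_min (by linarith) le_rfl
    simp only [hFdef]
    exact neg_le_neg (Real.log_le_log hpos hmono)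
  have hganti : AntitoneOn g (Set.Icc (0 : ℝ) (0 + ((n + 1 : ℕ) : ℝ))) := by
    intro x hx y hy hxy
    simp only [hgdef]
    refine hFanti (x / M) ?_ (y / M) ?_ ?_
    · exact div_nonneg hx.1 hM0.le
    · exact div_nonneg hy.1 hM0.le
    · gcongr
  -- Riemann sum bounds
  have hup := hganti.integral_le_sum
  have hlow := hganti.sum_le_integral
  -- compute the integral
  have hFcont : ContinuousOn F (Set.Icc (0 : ℝ) 1) := by
    apply ContinuousOn.neg
    apply ContinuousOn.log
    · exact ((continuous_id.add continuous_const).min continuous_const).continuousOn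
    · intro x hx
      have : (0 : ℝ) < min (x + b) 1 := lt_min (by linarith [hx.1]) one_pos
      exact this.ne'
  have hint1 : IntervalIntegrable F MeasureTheory.volume 0 (1 - b) := by
    apply ContinuousOn.intervalIntegrable
    apply hFcont.mono
    rw [Set.uIcc_of_le (by linarith)]
    exact Set.Icc_subset_Icc le_rfl (by linarith)
  have hint2 : IntervalIntegrable F MeasureTheory.volume (1 - b) 1 := by
    apply ContinuousOn.intervalIntegrable
    apply hFcont.mono
    rw [Set.uIcc_of_le (by linarith)]
    exact Set.Icc_subset_Icc (by linarith) le_rfl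
  have hI2 : ∫ x in (1 - b)..1, F x = 0 := by
    have heq : Set.EqOn F (fun _ => (0 : ℝ)) (Set.uIcc (1 - b) 1) := by
      intro x hx
      rw [Set.uIcc_of_le (by linarith)] at hx
      have hx1 : 1 ≤ x + b := by linarith [hx.1]
      simp only [hFdef, min_eq_right hx1, Real.log_one, neg_zero]
    rw [intervalIntegral.integral_congr heq, intervalIntegral.integral_zero]
  have hI1 : ∫ x in (0 : ℝ)..(1 - b), F x = 1 - b * (1 - Real.log b) := by
    have heq : Set.EqOn F (fun x => -Real.log (x + b)) (Set.uIcc 0 (1 - b)) := by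
      intro x hx
      rw [Set.uIcc_of_le (by linarith)] at hx
      have hxb : x + b ≤ 1 := by linarith [hx.2]
      simp only [hFdef, min_eq_left hxb]
    rw [intervalIntegral.integral_congr heq]
    rw [intervalIntegral.integral_neg]
    have hshift := intervalIntegral.integral_comp_add_right (a := (0 : ℝ)) (b := 1 - b)
      (f := Real.log) b
    rw [hshift]
    have h01 : (0 : ℝ) + b = b := by ring
    have h11 : (1 - b) + b = 1 := by ring
    rw [h01, h11]
    rw [integral_log]
    rw [Real.log_one]
    ring
  have hIfull : ∫ x in (0 : ℝ)..1, F x = 1 - b * (1 - Real.log b) := by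
    rw [← intervalIntegral.integral_add_adjacent_intervals hint1 hint2, hI1, hI2]
    ring
  have hInt : ∫ x in (0 : ℝ)..(0 + ((n + 1 : ℕ) : ℝ)), g x
      = M * (1 - b * (1 - Real.log b)) := by
    rw [hcastm]
    have hcd : (∫ x in (0 : ℝ)..M, F (x / M)) = M • ∫ x in (0 : ℝ) / M..M / M, F x :=
      intervalIntegral.integral_comp_div (f := F) (c := M) hM0.ne'
    have : (∫ x in (0 : ℝ)..M, g x) = (∫ x in (0 : ℝ)..M, F (x / M)) := rfl
    rw [this, hcd, zero_div, div_self hM0.ne', smul_eq_mul, hIfull]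
  -- identify the sum
  set R : ℝ := ∑ i ∈ Finset.range (n + 1), g ((0 : ℝ) + ((i + 1 : ℕ) : ℝ)) with hRdef
  have hS : (∑ i ∈ Finset.Icc 1 (n + 1), -Real.log (dkwmAdj δ n i)) = R := by
    rw [← Finset.Ico_add_one_right_eq_Icc, Finset.sum_Ico_eq_sum_range]
    refine Finset.sum_congr (by norm_num) fun i _ => ?_
    have harg : ((1 + i : ℕ) : ℝ) / ((n : ℝ) + 1) + b = ((0 : ℝ) + ((i + 1 : ℕ) : ℝ)) / M + b := by
      rw [hMdef]; push_cast; ring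
    simp only [dkwmAdj, hgdef, hFdef, ← hbdef]
    rw [harg]
  -- values of g at endpoints
  have hg0 : g 0 = -Real.log b := by
    simp only [hgdef, hFdef, zero_div, zero_add, min_eq_left hb1]
  have hgm : g (0 + ((n + 1 : ℕ) : ℝ)) = 0 := by
    rw [hcastm]
    simp only [hgdef, hFdef, div_self hM0.ne']
    rw [min_eq_right (by linarith), Real.log_one, neg_zero]
  -- left sum vs right sum
  have hLR : ∑ i ∈ Finset.range (n + 1), g ((0 : ℝ) + (i : ℕ))
      = R + g 0 - g (0 + ((n + 1 : ℕ) : ℝ)) := by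
    have h1 := Finset.sum_range_succ' (fun i : ℕ => g ((0 : ℝ) + (i : ℕ))) (n + 1)
    have h2 := Finset.sum_range_succ (fun i : ℕ => g ((0 : ℝ) + (i : ℕ))) (n + 1)
    simp only [Nat.cast_zero, add_zero] at h1
    rw [h2] at h1
    rw [hRdef]
    linarith [h1]
  -- combine
  have hlow' : R ≤ M * (1 - b * (1 - Real.log b)) := by rw [← hInt]; exact hlow
  have hup' : M * (1 - b * (1 - Real.log b)) ≤ R + (-Real.log b) := by
    rw [← hInt]
    calc (∫ x in (0 : ℝ)..(0 + ((n + 1 : ℕ) : ℝ)), g x)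
        ≤ ∑ i ∈ Finset.range (n + 1), g ((0 : ℝ) + (i : ℕ)) := hup
      _ = R + (-Real.log b) := by rw [hLR, hg0, hgm]; ring
  -- the main bound
  have hlogb0 : 0 ≤ -Real.log b := by
    have := Real.log_nonpos hb0.le hb1
    linarith
  have hkey : |(1 / ((n : ℝ) + 1)) * (∑ i ∈ Finset.Icc 1 (n + 1), -Real.log (dkwmAdj δ n i)) -
      (1 - b * (1 - Real.log b))| ≤ (-Real.log b) / M := by
    rw [hS]
    have e1 : (1 / ((n : ℝ) + 1)) * R - (1 - b * (1 - Real.log b))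
        = (R - M * (1 - b * (1 - Real.log b))) / M := by
      rw [hMdef]; field_simp
    rw [e1, abs_div, abs_of_pos hM0]
    have habs : |R - M * (1 - b * (1 - Real.log b))| ≤ -Real.log b := by
      rw [abs_le]
      constructor <;> linarith
    gcongr
  -- bound -log b by log n
  have hlogb : -Real.log b ≤ Real.log n := by
    rw [hbval, Real.log_sqrt harg0.le, Real.log_div hL.ne' (by positivity),
      Real.log_mul two_ne_zero hnR0.ne']
    have hkey2 : Real.log 2 - Real.log L ≤ Real.log n := by
      have h := Real.log_le_log (by positivity : (0 : ℝ) < 2 / L) h2L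
      rwa [Real.log_div two_ne_zero hL.ne'] at h
    linarith [Real.log_nonneg hnR]
  have hlogn0 : 0 ≤ Real.log n := Real.log_nonneg hnR
  calc |(1 / ((n : ℝ) + 1)) * (∑ i ∈ Finset.Icc 1 (n + 1), -Real.log (dkwmAdj δ n i)) -
      (1 - dkwmWidth δ n * (1 - Real.log (dkwmWidth δ n)))| ≤ (-Real.log b) / M := hkey
    _ ≤ Real.log n / M := by gcongr
    _ ≤ Real.log n / n := by
        apply div_le_div_of_nonneg_left hlogn0 hnR0 ?_
        · rw [hMdef]; linarith
    _ = 1 * Real.log n / n := by ring
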